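/- arXiv:0803.3702 — 3 statements merged into one kernel-verified Lean document; each statement's English description precedes it below -/
import Mathlib

section
/- Let λ ∈ R and set A := R/λR. If a, b ∈ A satisfy a^p = 0 and b^p = 0, then the Teichmüller lifts add: [a] + [b] = [a + b] in the ring 𝕎(A) of p-typical Witt vectors. In particular the Teichmüller map is an additive group homomorphism from {a ∈ A : a^p = 0} to 𝕎(A). -/
/-!
The `n`-th coefficient of `[a] + [b]` is `S_n(a, b)` for a universal integral polynomial
`S_n`, and comparing ghost components (`[x]` has ghost components `x ^ p ^ n`) shows by
induction on `n` that `S_n` is homogeneous of degree `p ^ n`. For `n ≥ 1` every monomial of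
`S_n(a, b)` therefore has degree at least `p`, and such monomials vanish in `R ⧸ (λ)`: since
divisibility in a valuation ring is total, `a ^ i * b ^ j` is a multiple of `a ^ p` or of `b ^ p`.
-/

open MvPolynomial

theorem PreValuationRing.pow_mul_pow_mem {R : Type*} [CommRing R] [PreValuationRing R]
    {I : Ideal R} {n i j : ℕ} {x y : R} (hx : x ^ n ∈ I) (hy : y ^ n ∈ I) (hij : n ≤ i + j) :
    x ^ i * y ^ j ∈ I := by
  rcases ValuationRing.dvd_total x y with hxy | hyx
  · refine I.mem_of_dvd ((pow_dvd_pow x hij).trans ?_) hx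
    rw [pow_add]
    exact mul_dvd_mul_left _ (pow_dvd_pow_of_dvd hxy j)
  · refine I.mem_of_dvd ((pow_dvd_pow y hij).trans ?_) hy
    rw [pow_add]
    exact mul_dvd_mul_right (pow_dvd_pow_of_dvd hyx i) _

theorem PreValuationRing.quotient_pow_mul_pow_eq_zero {R : Type*} [CommRing R]
    [PreValuationRing R] {I : Ideal R} {n i j : ℕ} {a b : R ⧸ I} (ha : a ^ n = 0)
    (hb : b ^ n = 0) (hij : n ≤ i + j) : a ^ i * b ^ j = 0 := by
  obtain ⟨x, rfl⟩ := Ideal.Quotient.mk_surjective a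
  obtain ⟨y, rfl⟩ := Ideal.Quotient.mk_surjective b
  rw [← map_pow, Ideal.Quotient.eq_zero_iff_mem] at ha hb
  rw [← map_pow, ← map_pow, ← map_mul, Ideal.Quotient.eq_zero_iff_mem]
  exact pow_mul_pow_mem ha hb hij

namespace MvPolynomial

theorem IsHomogeneous.of_C_mul {σ R : Type*} [CommSemiring R] [NoZeroDivisors R]
    {c : R} (hc : c ≠ 0) {φ : MvPolynomial σ R} {m : ℕ} (h : (C c * φ).IsHomogeneous m) :
    φ.IsHomogeneous m := fun d hd =>
  h (by rw [coeff_C_mul]; exact mul_ne_zero hc hd)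

theorem aeval_pair_eq_zero_of_isHomogeneous {R A : Type*} [CommSemiring R] [CommSemiring A]
    [Algebra R A] {a b : A} {φ : MvPolynomial (Fin 2) R} {m : ℕ} (hφ : φ.IsHomogeneous m)
    (hab : ∀ i j : ℕ, i + j = m → a ^ i * b ^ j = 0) :
    aeval ![a, b] φ = 0 := by
  rw [φ.as_sum, map_sum]
  refine Finset.sum_eq_zero fun d hd => ?_
  have hdeg : d 0 + d 1 = m := by
    simpa [Finsupp.weight_apply, Finsupp.sum_fintype, Fin.sum_univ_two]
      using hφ (mem_support_iff.mp hd)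
  rw [aeval_monomial, Finsupp.prod_fintype _ _ (fun _ => pow_zero _), Fin.prod_univ_two]
  simp [hab _ _ hdeg]

end MvPolynomial

namespace WittVector

variable {p : ℕ} [hp : Fact p.Prime]

local notation "𝕎" => WittVector p

theorem ghostComponent_eq_sum {R : Type*} [CommRing R] (x : 𝕎 R) (n : ℕ) :
    ghostComponent n x = ∑ i ∈ Finset.range (n + 1), (p : R) ^ i * x.coeff i ^ p ^ (n - i) := by
  rw [ghostComponent_apply, aeval_wittPolynomial]

theorem isHomogeneous_coeff_of_isHomogeneous_ghostComponent {σ : Type*}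
    (x : 𝕎 (MvPolynomial σ ℤ)) (hx : ∀ n, (ghostComponent n x).IsHomogeneous (p ^ n))
    (n : ℕ) : (x.coeff n).IsHomogeneous (p ^ n) := by
  induction n using Nat.strong_induction_on with
  | _ n ih =>
    have hghost := ghostComponent_eq_sum x n
    rw [Finset.sum_range_succ, Nat.sub_self, pow_zero, pow_one] at hghost
    have hlower : (∑ i ∈ Finset.range n,
        (p : MvPolynomial σ ℤ) ^ i * x.coeff i ^ p ^ (n - i)).IsHomogeneous (p ^ n) := by
      refine IsHomogeneous.sum _ _ _ fun i hi => ?_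
      have hi' := Finset.mem_range.1 hi
      have := ((ih i hi').pow (p ^ (n - i))).C_mul ((p : ℤ) ^ i)
      rwa [← pow_add, Nat.add_sub_cancel' hi'.le, map_pow, map_natCast] at this
    have hcoeff : C ((p : ℤ) ^ n) * x.coeff n = ghostComponent n x -
        ∑ i ∈ Finset.range n, (p : MvPolynomial σ ℤ) ^ i * x.coeff i ^ p ^ (n - i) := by
      rw [hghost]; simp
    refine IsHomogeneous.of_C_mul (c := (p : ℤ) ^ n) (pow_ne_zero n (by exact_mod_cast hp.out.ne_zero)) ?_
    rw [hcoeff]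
    exact (hx n).sub hlower

theorem isHomogeneous_teichmuller_add_teichmuller_coeff {σ : Type*} (i j : σ) (n : ℕ) :
    ((teichmuller p (X i) + teichmuller p (X j) : 𝕎 (MvPolynomial σ ℤ)).coeff n).IsHomogeneous
      (p ^ n) := by
  refine isHomogeneous_coeff_of_isHomogeneous_ghostComponent _ (fun m => ?_) n
  rw [map_add, ghostComponent_teichmuller, ghostComponent_teichmuller]
  exact (isHomogeneous_X_pow i _).add (isHomogeneous_X_pow j _)

theorem teichmuller_add_teichmuller_coeff {A : Type*} [CommRing A] (a b : A) (n : ℕ) :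
    (teichmuller p a + teichmuller p b).coeff n = aeval ![a, b]
      ((teichmuller p (X 0) + teichmuller p (X 1) : 𝕎 (MvPolynomial (Fin 2) ℤ)).coeff n) := by
  rw [← AlgHom.coe_toRingHom, ← map_coeff, map_add, map_teichmuller, map_teichmuller]
  simp

theorem teichmuller_add_teichmuller {A : Type*} [CommRing A] {a b : A}
    (hab : ∀ i j : ℕ, p ≤ i + j → a ^ i * b ^ j = 0) :
    teichmuller p a + teichmuller p b = teichmuller p (a + b) := by
  ext (_ | n)
  · simp only [add_coeff_zero, teichmuller_coeff_zero]
  · rw [teichmuller_coeff_pos _ _ _ n.succ_pos, teichmuller_add_teichmuller_coeff]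
    refine aeval_pair_eq_zero_of_isHomogeneous
      (isHomogeneous_teichmuller_add_teichmuller_coeff _ _ _) fun i j hij => hab i j ?_
    rw [hij]
    exact Nat.le_self_pow n.succ_ne_zero p

end WittVector

theorem stmt_2_general (p : ℕ) [Fact p.Prime] (R : Type*) [CommRing R] [IsDomain R]
    [IsDiscreteValuationRing R]
    (lam : R)
    (a b : R ⧸ Ideal.span {lam}) (ha : a ^ p = 0) (hb : b ^ p = 0) :
    WittVector.teichmuller p a + WittVector.teichmuller p b
      = WittVector.teichmuller p (a + b) :=
  WittVector.teichmuller_add_teichmuller fun _ _ =>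
    PreValuationRing.quotient_pow_mul_pow_eq_zero ha hb

/-- Let `λ ∈ R` and `A := R/λR`. If `a, b ∈ A` satisfy `a^p = 0` and `b^p = 0`,
then the Teichmüller lifts add: `[a] + [b] = [a + b]` in `𝕎(A)`. -/
theorem stmt_2 (p : ℕ) [Fact p.Prime] (R : Type*) [CommRing R] [IsDomain R]
    [IsDiscreteValuationRing R] [CharZero R] [CharP (IsLocalRing.ResidueField R) p]
    (lam : R)
    (a b : R ⧸ Ideal.span {lam}) (ha : a ^ p = 0) (hb : b ^ p = 0) :
    WittVector.teichmuller p a + WittVector.teichmuller p b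
      = WittVector.teichmuller p (a + b) :=
  stmt_2_general p R lam a b ha hb
end

section
/- Let A be a commutative ring, c ∈ A, and b ∈ 𝕎(A). Then for every n ≥ 0, the n-th coefficient of the product [c]·b equals c^{p^n} · (n-th coefficient of b). -/
/-!
Both sides are polynomial in `c` and the coefficients of `b` with integer coefficients, so it
suffices to treat the universal case over `ℤ[c, b₀, b₁, …]`, which embeds into a ring where `p` is
invertible. There the ghost map is injective, and on ghost components multiplication by `[c]`
multiplies the `n`-th component by `c ^ p ^ n`, exactly as rescaling the `i`-th coefficient by
`c ^ p ^ i` does.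
-/

open MvPolynomial Function

namespace WittVector

variable {p : ℕ} [Fact p.Prime] {R : Type*} [CommRing R]

theorem ghostComponent_mk_pow_mul (c : R) (x : WittVector p R) (n : ℕ) :
    ghostComponent n (mk p fun i => c ^ p ^ i * x.coeff i) = c ^ p ^ n * ghostComponent n x := by
  simp only [ghostComponent_apply, aeval_wittPolynomial, coeff_mk, Finset.mul_sum]
  refine Finset.sum_congr rfl fun i hi => ?_
  have hin : i ≤ n := Nat.lt_succ_iff.mp (Finset.mem_range.mp hi)
  rw [mul_pow, ← pow_mul, ← pow_add, Nat.add_sub_cancel' hin]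
  ring

theorem teichmuller_mul_eq_mk_of_invertible [Invertible (p : R)] (c : R) (x : WittVector p R) :
    teichmuller p c * x = mk p fun i => c ^ p ^ i * x.coeff i := by
  refine (ghostMap.bijective_of_invertible p R).injective (funext fun n => ?_)
  change ghostComponent n (teichmuller p c * x) = ghostComponent n _
  rw [map_mul, ghostComponent_teichmuller, ghostComponent_mk_pow_mul]

theorem teichmuller_mul_eq_mk_of_injective {S : Type*} [CommRing S] [Invertible (p : S)]
    (f : R →+* S) (hf : Injective f) (c : R) (x : WittVector p R) :
    teichmuller p c * x = mk p fun i => c ^ p ^ i * x.coeff i := by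
  ext n
  apply hf
  rw [← map_coeff, map_mul, map_teichmuller, teichmuller_mul_eq_mk_of_invertible]
  simp [map_coeff]

theorem teichmuller_mul_eq_mk_of_mvPolynomial_int {σ : Type*} (c : MvPolynomial σ ℤ)
    (x : WittVector p (MvPolynomial σ ℤ)) :
    teichmuller p c * x = mk p fun i => c ^ p ^ i * x.coeff i := by
  have hp : IsUnit (p : MvPolynomial σ ℚ) := by
    simpa using (Nat.cast_ne_zero.2 (Fact.out : p.Prime).ne_zero : (p : ℚ) ≠ 0).isUnit.map
      (algebraMap ℚ (MvPolynomial σ ℚ))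
  let := hp.invertible
  exact teichmuller_mul_eq_mk_of_injective (MvPolynomial.map (Int.castRingHom ℚ))
    (MvPolynomial.map_injective _ Int.cast_injective) c x

theorem teichmuller_mul_eq_mk (c : R) (x : WittVector p R) :
    teichmuller p c * x = mk p fun i => c ^ p ^ i * x.coeff i := by
  let f : MvPolynomial (Option ℕ) ℤ →+* R := eval₂Hom (Int.castRingHom R) (Option.elim · c x.coeff)
  have hx : map f (mk p fun i => X (some i)) = x := by ext i; simp [f, map_coeff]
  have hc : f (X none) = c := by simp [f]
  ext n
  rw [← hx, ← hc, ← map_teichmuller, ← map_mul, teichmuller_mul_eq_mk_of_mvPolynomial_int]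
  simp [map_coeff]

end WittVector

/-- For a commutative ring `A`, `c ∈ A` and `b ∈ 𝕎(A)`, the `n`-th coefficient
of `[c]·b` equals `c^(p^n) · b_n`. -/
theorem stmt_9 (p : ℕ) [Fact p.Prime] (A : Type*) [CommRing A] (c : A)
    (b : WittVector p A) (n : ℕ) :
    (WittVector.teichmuller p c * b).coeff n = c ^ p ^ n * b.coeff n := by
  rw [WittVector.teichmuller_mul_eq_mk, WittVector.coeff_mk]
end

section
/- Assume p > 2 and that R contains a primitive p²-th root of unity ζ; set λ_{(1)} := ζ^p − 1. Let μ, λ ∈ R be nonzero with v(λ_{(1)}) ≥ v(μ) ≥ v(λ) and v(μ) < p·v(λ), and let c ∈ R be the element with c·μ^{p−1} = p. If j is an integer not divisible by p and b ∈ R satisfies that λ divides b^p and λ^p divides p·b − j·μ − c·b^p, then b ≠ 0 and p·v(b) = p·v(μ) − v(p). -/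
/-!
The hypotheses on `v` force `v = addVal R`. Since `(ζ^p - 1)^(p-1)`
divides `p` and `p > 2`, the bound `v μ ≤ v (ζ^p - 1)` gives `v μ < v p`; also `v (p b) ≥ v p`,
`v (j μ) = v μ` because `j` is a unit, and the error term is divisible by `λ^p` with
`p·v λ > v μ`. In `c b^p = p b - j μ - (error)` only `j μ` then has the minimal valuation,
so `v c + p·v b = v (c b^p) = v μ`; adding `(p-1)·v μ` and using `c μ^(p-1) = p` finishes.
-/

namespace IsDiscreteValuationRing

variable {R : Type*} [CommRing R] [IsDomain R] [IsDiscreteValuationRing R]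

theorem eq_addVal_of_pow_dvd {v : R → ℕ∞} {π : R} (hπ : Irreducible π) (hv0 : v 0 = ⊤)
    (hv : ∀ x : R, x ≠ 0 → ∃ n : ℕ, v x = n ∧ π ^ n ∣ x ∧ ¬ π ^ (n + 1) ∣ x) :
    v = addVal R := by
  funext x
  rcases eq_or_ne x 0 with rfl | hx
  · rw [hv0, addVal_zero]
  obtain ⟨n, hvx, hdvd, hndvd⟩ := hv x hx
  rw [← addVal_le_iff_dvd, hπ.addVal_pow] at hdvd hndvd
  rw [hvx]
  exact (le_antisymm (Order.le_of_lt_add_one (not_le.mp (by exact_mod_cast hndvd))) hdvd).symm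

theorem addVal_intCast_eq_zero_iff (p : ℕ) [CharP (IsLocalRing.ResidueField R) p] (j : ℤ) :
    addVal R j = 0 ↔ ¬ (p : ℤ) ∣ j := by
  rw [addVal_eq_zero_iff, ← IsLocalRing.residue_ne_zero_iff_isUnit, map_intCast,
    Ne, CharP.intCast_eq_zero_iff _ p]

theorem addVal_sub_one_lt_addVal_natCast [CharZero R] {p : ℕ} (hp : p.Prime) (hp2 : 2 < p)
    [CharP (IsLocalRing.ResidueField R) p] {η : R} (hη : IsPrimitiveRoot η p) :
    addVal R (η - 1) < addVal R p := by
  have hdvd : (η - 1) ^ (p - 1) ∣ (p : R) := by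
    obtain ⟨z, -, hz⟩ := hη.self_sub_one_pow_dvd_order (Nat.sub_lt hp.pos one_pos)
    exact ⟨z, hz.trans (mul_comm _ _)⟩
  rw [← addVal_le_iff_dvd, addVal_pow] at hdvd
  have hp_top : addVal R (p : R) ≠ ⊤ := by
    rw [Ne, addVal_eq_top_iff]
    exact Nat.cast_ne_zero.mpr hp.ne_zero
  have hp_zero : addVal R (p : R) ≠ 0 := by
    simpa using (addVal_intCast_eq_zero_iff p (p : ℤ)).not.mpr (by simp)
  lift addVal R (p : R) to ℕ using hp_top with n hn
  have hx_top : addVal R (η - 1) ≠ ⊤ := by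
    rintro hx
    rw [hx, nsmul_eq_mul, ENat.mul_top (by norm_cast; omega)] at hdvd
    exact ENat.natCast_ne_top n (top_le_iff.mp hdvd)
  lift addVal R (η - 1) to ℕ using hx_top with m
  rw [nsmul_eq_mul] at hdvd
  norm_cast at hdvd hp_zero ⊢
  have : 2 * m ≤ (p - 1) * m := Nat.mul_le_mul_right m (by omega)
  omega

end IsDiscreteValuationRing

open IsDiscreteValuationRing in
theorem stmt_15_general (p : ℕ) (hp : p.Prime) (hp2 : 2 < p)
    (R : Type*) [CommRing R] [IsDomain R] [IsDiscreteValuationRing R] [CharZero R]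
    [CharP (IsLocalRing.ResidueField R) p]
    (v : R → ℕ∞) (π : R) (hπ : Irreducible π) (hv0 : v 0 = ⊤)
    (hv : ∀ x : R, x ≠ 0 → ∃ n : ℕ, v x = n ∧ π ^ n ∣ x ∧ ¬ π ^ (n + 1) ∣ x)
    (ζ : R) (hζ : IsPrimitiveRoot ζ (p ^ 2))
    (μ lam : R)
    (h1 : v μ ≤ v (ζ ^ p - 1)) (h3 : v μ < (p : ℕ∞) * v lam)
    (c : R) (hc : c * μ ^ (p - 1) = (p : R))
    (j : ℤ) (hj : ¬ (p : ℤ) ∣ j) (b : R)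
    (hb2 : lam ^ p ∣ ((p : R) * b - (j : R) * μ - c * b ^ p)) :
    b ≠ 0 ∧ (p : ℕ∞) * v b + v (p : R) = (p : ℕ∞) * v μ := by
  obtain rfl : v = addVal R := eq_addVal_of_pow_dvd hπ hv0 hv
  have hμp : addVal R μ < addVal R p := h1.trans_lt <|
    addVal_sub_one_lt_addVal_natCast hp hp2 (hζ.pow (by positivity) (pow_two p))
  have hjμ : addVal R (-((j : R) * μ)) = addVal R μ := by
    rw [AddValuation.map_neg, addVal_mul, (addVal_intCast_eq_zero_iff p j).mpr hj, zero_add]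
  have hpb : addVal R μ < addVal R ((p : R) * b) :=
    hμp.trans_le (by rw [addVal_mul]; exact le_self_add)
  set err := (p : R) * b - j * μ - c * b ^ p with herr_def
  have herr : addVal R μ < addVal R err := by
    refine h3.trans_le ?_
    rw [← nsmul_eq_mul, ← addVal_pow]
    exact addVal_le_iff_dvd.mpr hb2
  have hcb : addVal R c + p • addVal R b = addVal R μ := by
    have hsplit : c * b ^ p = -((j : R) * μ) + ((p : R) * b - err) := by
      rw [herr_def]; ring
    have hlt : addVal R (-((j : R) * μ)) < addVal R ((p : R) * b - err) :=
      hjμ ▸ (lt_min hpb herr).trans_le ((addVal R).map_sub _ _)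
    rw [← addVal_pow, ← addVal_mul, hsplit, (addVal R).map_add_eq_of_lt_left hlt, hjμ]
  have hb0 : b ≠ 0 := by
    rintro rfl
    rw [AddValuation.map_zero, nsmul_eq_mul, ENat.mul_top (by exact_mod_cast hp.ne_zero),
      add_top] at hcb
    exact hμp.ne_top hcb.symm
  have hcμ : addVal R c + (p - 1) • addVal R μ = addVal R p := by
    rw [← addVal_pow, ← addVal_mul, hc]
  refine ⟨hb0, ?_⟩
  calc (p : ℕ∞) * addVal R b + addVal R p
      = (addVal R c + p • addVal R b) + (p - 1) • addVal R μ := by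
        rw [← hcμ, nsmul_eq_mul]; ring
    _ = p • addVal R μ := by rw [hcb, ← succ_nsmul', Nat.sub_add_cancel hp.one_le]
    _ = p * addVal R μ := nsmul_eq_mul _ _

/-- With `p > 2`, `ζ` a primitive `p²`-th root of unity, `λ₁ := ζ^p - 1`,
`μ, λ` nonzero with `v(λ₁) ≥ v(μ) ≥ v(λ)` and `v(μ) < p·v(λ)`, and `c·μ^{p-1} = p`:
if `j` is an integer not divisible by `p` and `b ∈ R` satisfies `λ ∣ b^p` and
`λ^p ∣ p·b - j·μ - c·b^p`, then `b ≠ 0` and `p·v(b) = p·v(μ) - v(p)`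
(stated as `p·v(b) + v(p) = p·v(μ)`). -/
theorem stmt_15 (p : ℕ) (hp : p.Prime) (hp2 : 2 < p)
    (R : Type*) [CommRing R] [IsDomain R] [IsDiscreteValuationRing R] [CharZero R]
    [CharP (IsLocalRing.ResidueField R) p]
    (v : R → ℕ∞) (π : R) (hπ : Irreducible π) (hv0 : v 0 = ⊤)
    (hv : ∀ x : R, x ≠ 0 → ∃ n : ℕ, v x = n ∧ π ^ n ∣ x ∧ ¬ π ^ (n + 1) ∣ x)
    (ζ : R) (hζ : IsPrimitiveRoot ζ (p ^ 2))
    (μ lam : R) (hμ0 : μ ≠ 0) (hlam0 : lam ≠ 0)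
    (h1 : v μ ≤ v (ζ ^ p - 1)) (h2 : v lam ≤ v μ) (h3 : v μ < (p : ℕ∞) * v lam)
    (c : R) (hc : c * μ ^ (p - 1) = (p : R))
    (j : ℤ) (hj : ¬ (p : ℤ) ∣ j) (b : R)
    (hb1 : lam ∣ b ^ p) (hb2 : lam ^ p ∣ ((p : R) * b - (j : R) * μ - c * b ^ p)) :
    b ≠ 0 ∧ (p : ℕ∞) * v b + v (p : R) = (p : ℕ∞) * v μ :=
  stmt_15_general p hp hp2 R v π hπ hv0 hv ζ hζ μ lam h1 h3 c hc j hj b hb2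
end
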